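/- Let A be a Hermitian matrix, let Q be a matrix with orthonormal columns, and let r = p/q be a rational function whose poles avoid the spectra of A and Q^H A Q. If b ∈ span(Q) and Q(A, b, ξ_k) ⊆ span(Q), where ξ_k contains the poles of r padded with ∞ to cardinality max{deg p + 1, deg q}, then Q r(Q^H A Q) Q^H b = r(A) b. -/
import Mathlib


open Matrix Polynomial

/-- The rational Krylov subspace with denominator polynomial `q` and `k` directions. -/
noncomputable def ratKrylovQ {n : ℕ} (k : ℕ) (q : Polynomial ℂ)
    (A : Matrix (Fin n) (Fin n) ℂ) (b : Fin n → ℂ) : Submodule ℂ (Fin n → ℂ) :=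
  Submodule.span ℂ {v | ∃ i < k, v = (aeval A q)⁻¹ *ᵥ ((A ^ i) *ᵥ b)}

/-- The rational matrix function `r(A) = q(A)⁻¹ p(A)` for `r = p/q`. -/
noncomputable def ratApply {α : Type*} [Fintype α] [DecidableEq α] (p q : Polynomial ℂ)
    (A : Matrix α α ℂ) : Matrix α α ℂ :=
  (aeval A q)⁻¹ * aeval A p

private lemma sum_mulVec' {m k ι : Type*} [Fintype k] (s : Finset ι)
    (M : ι → Matrix m k ℂ) (v : k → ℂ) :
    (∑ i ∈ s, M i) *ᵥ v = ∑ i ∈ s, (M i *ᵥ v) := by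
  induction s using Finset.cons_induction with
  | empty => simp
  | cons a s ha ih => simp [Matrix.add_mulVec, ih]

/-- If no root of `q` is in the spectrum of `M` and `q ≠ 0`, then `q(M)` is a unit. -/
private lemma mulVec_sum' {m k ι : Type*} [Fintype k] (s : Finset ι)
    (M : Matrix m k ℂ) (v : ι → k → ℂ) :
    M *ᵥ (∑ i ∈ s, v i) = ∑ i ∈ s, M *ᵥ v i := by
  induction s using Finset.cons_induction with
  | empty => simp
  | cons a s ha ih => simp [Matrix.mulVec_add, ih]

private lemma isUnit_aeval_of_roots {m : ℕ} (M : Matrix (Fin m) (Fin m) ℂ) (k : ℕ) :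
    ∀ q : Polynomial ℂ, q.natDegree = k → q ≠ 0 →
      (∀ z : ℂ, q.IsRoot z → z ∉ spectrum ℂ M) → IsUnit (aeval M q) := by
  induction k using Nat.strong_induction_on with
  | _ k ih =>
    intro q hk hq hroots
    by_cases h0 : q.natDegree = 0
    · obtain ⟨c, rfl⟩ := Polynomial.natDegree_eq_zero.mp h0
      have hc : c ≠ 0 := by simpa using hq
      rw [aeval_C]
      exact (isUnit_iff_ne_zero.mpr hc).map _
    · have hdeg : q.degree ≠ 0 := fun h => h0 (Polynomial.natDegree_eq_zero_iff_degree_le_zero.mpr h.le)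
      have hdpos : 0 < q.degree := by
        rw [Polynomial.degree_eq_natDegree hq]
        exact_mod_cast Nat.pos_of_ne_zero h0
      obtain ⟨z, hz⟩ := Complex.exists_root hdpos
      obtain ⟨q', hq'⟩ := Polynomial.dvd_iff_isRoot.mpr hz
      have hq'0 : q' ≠ 0 := by rintro rfl; simp [hq'] at hq
      have hXz : (X - C z : Polynomial ℂ) ≠ 0 := Polynomial.X_sub_C_ne_zero z
      have hdegq' : q'.natDegree < k := by
        rw [← hk, hq', Polynomial.natDegree_mul hXz hq'0, Polynomial.natDegree_X_sub_C]
        omega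
      have hroots' : ∀ z' : ℂ, q'.IsRoot z' → z' ∉ spectrum ℂ M := by
        intro z' hz'
        exact hroots z' (by rw [hq']; simp [Polynomial.IsRoot] at hz' ⊢; right; exact hz')
      have hu' := ih q'.natDegree hdegq' q' rfl hq'0 hroots'
      have huz : IsUnit (aeval M (X - C z)) := by
        rw [map_sub, aeval_X, aeval_C, ← neg_sub]
        exact (spectrum.notMem_iff.mp (hroots z hz)).neg
      rw [hq', _root_.map_mul]
      exact huz.mul hu'

/-- Commuting with the nonsingular inverse. -/
private lemma inv_comm' {m : ℕ} {M N : Matrix (Fin m) (Fin m) ℂ} (h : IsUnit M.det)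
    (hc : M * N = N * M) : M⁻¹ * N = N * M⁻¹ := by
  calc M⁻¹ * N = M⁻¹ * (N * (M * M⁻¹)) := by rw [Matrix.mul_nonsing_inv _ h, Matrix.mul_one]
    _ = M⁻¹ * (M * N * M⁻¹) := by rw [← Matrix.mul_assoc N M, ← hc]
    _ = M⁻¹ * M * (N * M⁻¹) := by simp only [Matrix.mul_assoc]
    _ = N * M⁻¹ := by rw [Matrix.nonsing_inv_mul _ h, Matrix.one_mul]

private lemma pow_proj {n d : ℕ} (A : Matrix (Fin n) (Fin n) ℂ) (Q : Matrix (Fin n) (Fin d) ℂ)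
    (hQ : Qᴴ * Q = 1) (u : Fin n → ℂ) (k : ℕ)
    (hmem : ∀ j < k, (A ^ j) *ᵥ u ∈ LinearMap.range Q.mulVecLin) :
    ∀ j ≤ k, ((Qᴴ * A * Q) ^ j) *ᵥ (Qᴴ *ᵥ u) = Qᴴ *ᵥ ((A ^ j) *ᵥ u) := by
  intro j hj
  induction j with
  | zero => simp
  | succ j ih =>
    obtain ⟨w, hw⟩ := hmem j (lt_of_lt_of_le (Nat.lt_succ_self j) hj)
    rw [Matrix.mulVecLin_apply] at hw
    have e1 : ((Qᴴ * A * Q) ^ (j + 1)) *ᵥ (Qᴴ *ᵥ u)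
        = Qᴴ *ᵥ (A *ᵥ (Q *ᵥ (((Qᴴ * A * Q) ^ j) *ᵥ (Qᴴ *ᵥ u)))) := by
      simp only [pow_succ', ← Matrix.mulVec_mulVec]
    rw [e1, ih (Nat.le_of_succ_le hj), ← hw]
    have e2 : Q *ᵥ (Qᴴ *ᵥ (Q *ᵥ w)) = Q *ᵥ w := by
      rw [Matrix.mulVec_mulVec, Matrix.mulVec_mulVec, Matrix.mul_assoc, hQ, Matrix.mul_one]
    rw [e2, hw]
    simp only [pow_succ', ← Matrix.mulVec_mulVec]

private lemma aeval_proj {n d : ℕ} (A : Matrix (Fin n) (Fin n) ℂ) (Q : Matrix (Fin n) (Fin d) ℂ)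
    (hQ : Qᴴ * Q = 1) (u : Fin n → ℂ) (k : ℕ)
    (hmem : ∀ j < k, (A ^ j) *ᵥ u ∈ LinearMap.range Q.mulVecLin)
    (s : Polynomial ℂ) (hs : s.natDegree ≤ k) :
    aeval (Qᴴ * A * Q) s *ᵥ (Qᴴ *ᵥ u) = Qᴴ *ᵥ (aeval A s *ᵥ u) := by
  rw [aeval_eq_sum_range (Qᴴ * A * Q), aeval_eq_sum_range A, sum_mulVec', sum_mulVec',
    mulVec_sum']
  refine Finset.sum_congr rfl fun i hi => ?_
  rw [Matrix.smul_mulVec, Matrix.smul_mulVec, Matrix.mulVec_smul]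
  congr 1
  exact pow_proj A Q hQ u k hmem i
    (le_trans (Nat.le_of_lt_succ (Finset.mem_range.mp hi)) hs)

/-- Exactness of rational Krylov approximation: if `b ∈ span(Q)` and
`Q(A, b, ξ_k) ⊆ span(Q)`, where `ξ_k` consists of the poles of `r = p/q` padded with `∞` up
to cardinality `max(deg p + 1, deg q)`, then `Q r(Qᴴ A Q) Qᴴ b = r(A) b`. -/
theorem rational_krylov_exactness {n d : ℕ}
    (A : Matrix (Fin n) (Fin n) ℂ) (hA : A.IsHermitian) (b : Fin n → ℂ)
    (p q : Polynomial ℂ)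
    (Q : Matrix (Fin n) (Fin d) ℂ) (hQ : Qᴴ * Q = 1)
    (hb : Q *ᵥ (Qᴴ *ᵥ b) = b)
    (hspan : ratKrylovQ (max (p.natDegree + 1) q.natDegree) q A b
      ≤ LinearMap.range Q.mulVecLin)
    (hpolesA : ∀ z : ℂ, q.IsRoot z → z ∉ spectrum ℂ A)
    (hpolesT : ∀ z : ℂ, q.IsRoot z → z ∉ spectrum ℂ (Qᴴ * A * Q)) :
    Q *ᵥ (ratApply p q (Qᴴ * A * Q) *ᵥ (Qᴴ *ᵥ b)) = ratApply p q A *ᵥ b := by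
  rcases Nat.eq_zero_or_pos n with hn | hn
  · subst hn; funext i; exact i.elim0
  by_cases hq0 : q = 0
  · exfalso
    have i : Fin n := ⟨0, hn⟩
    have hμ := hA.eigenvalues_mem_spectrum_real i
    refine hpolesA (hA.eigenvalues i) (by simp [hq0, Polynomial.IsRoot]) ?_
    rw [spectrum.mem_iff] at hμ ⊢
    rwa [IsScalarTower.algebraMap_apply ℝ ℂ (Matrix (Fin n) (Fin n) ℂ),
      Complex.coe_algebraMap] at hμ
  set k := max (p.natDegree + 1) q.natDegree with hk
  set T := Qᴴ * A * Q with hT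
  have hSunit : IsUnit (aeval A q) := isUnit_aeval_of_roots A q.natDegree q rfl hq0 hpolesA
  have hTunit : IsUnit (aeval T q) := isUnit_aeval_of_roots T q.natDegree q rfl hq0 hpolesT
  have hSdet : IsUnit (aeval A q).det := (Matrix.isUnit_iff_isUnit_det _).mp hSunit
  have hTdet : IsUnit (aeval T q).det := (Matrix.isUnit_iff_isUnit_det _).mp hTunit
  set u : Fin n → ℂ := (aeval A q)⁻¹ *ᵥ b with hu
  have hqk : q.natDegree ≤ k := le_max_right _ _
  have hpk : p.natDegree < k := lt_of_lt_of_le (Nat.lt_succ_self _) (le_max_left _ _)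
  -- commutation of q(A)⁻¹ with polynomials in A
  have hcommA : ∀ s : Polynomial ℂ, (aeval A q)⁻¹ * aeval A s = aeval A s * (aeval A q)⁻¹ :=
    fun s => inv_comm' hSdet (by rw [← _root_.map_mul, ← _root_.map_mul, mul_comm])
  have hcommT : (aeval T q)⁻¹ * aeval T p = aeval T p * (aeval T q)⁻¹ :=
    inv_comm' hTdet (by rw [← _root_.map_mul, ← _root_.map_mul, mul_comm])
  -- Krylov directions lie in the range of Q
  have hmem : ∀ j < k, (A ^ j) *ᵥ u ∈ LinearMap.range Q.mulVecLin := by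
    intro j hj
    have : (A ^ j) *ᵥ u = (aeval A q)⁻¹ *ᵥ ((A ^ j) *ᵥ b) := by
      rw [hu, Matrix.mulVec_mulVec, Matrix.mulVec_mulVec]
      have h3 := hcommA (X ^ j)
      rw [_root_.map_pow, aeval_X] at h3
      rw [h3]
    exact hspan (Submodule.subset_span ⟨j, hj, this⟩)
  have key : ∀ s : Polynomial ℂ, s.natDegree ≤ k →
      aeval T s *ᵥ (Qᴴ *ᵥ u) = Qᴴ *ᵥ (aeval A s *ᵥ u) := fun s hs =>
    aeval_proj A Q hQ u k hmem s hs
  -- q(A) u = b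
  have hSu : aeval A q *ᵥ u = b := by
    rw [hu, Matrix.mulVec_mulVec, Matrix.mul_nonsing_inv _ hSdet, Matrix.one_mulVec]
  -- q(T)⁻¹ Qᴴ b = Qᴴ u
  have h2 : (aeval T q)⁻¹ *ᵥ (Qᴴ *ᵥ b) = Qᴴ *ᵥ u := by
    rw [← hSu, ← key q hqk, Matrix.mulVec_mulVec, Matrix.nonsing_inv_mul _ hTdet,
      Matrix.one_mulVec]
  -- x := p(A) u lies in range of Q
  have hx : aeval A p *ᵥ u ∈ LinearMap.range Q.mulVecLin := by
    rw [aeval_eq_sum_range, sum_mulVec']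
    refine Submodule.sum_mem _ fun i hi => ?_
    rw [Matrix.smul_mulVec]
    exact Submodule.smul_mem _ _
      (hmem i (lt_of_le_of_lt (Nat.le_of_lt_succ (Finset.mem_range.mp hi)) hpk))
  obtain ⟨w, hw⟩ := hx
  rw [Matrix.mulVecLin_apply] at hw
  have hQw : Q *ᵥ (Qᴴ *ᵥ (aeval A p *ᵥ u)) = aeval A p *ᵥ u := by
    rw [← hw]
    calc Q *ᵥ (Qᴴ *ᵥ (Q *ᵥ w)) = (Q * (Qᴴ * Q)) *ᵥ w := by
          simp [Matrix.mulVec_mulVec, Matrix.mul_assoc]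
      _ = Q *ᵥ w := by rw [hQ, Matrix.mul_one]
  have hLHS : ratApply p q T *ᵥ (Qᴴ *ᵥ b) = Qᴴ *ᵥ (aeval A p *ᵥ u) := by
    rw [ratApply, hcommT, ← Matrix.mulVec_mulVec, h2, key p hpk.le]
  have hRHS : ratApply p q A *ᵥ b = aeval A p *ᵥ u := by
    rw [ratApply, hcommA p, ← Matrix.mulVec_mulVec, ← hu]
  rw [hLHS, hRHS, hQw]
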